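/- (C_n sequence.) Let n ≥ 3 be an integer. On ℝ^{2+n} = ℝ³ × ℝ^{n−1} (d = 3 scale factors, n−1 dilatons φ¹,…,φ^{n−1}) consider the n+2 wall forms, indexed by −1, 0, 1, …, n: w_{−1} = e₃ − e₂, w₀ = e₂ − e₁, w₁ = e₁ − (√2/2)φ^{n−1}, w_j = (√2/2)(φ^{n−j+1} − φ^{n−j}) for 2 ≤ j ≤ n−1, and w_n = √2 φ¹. Then (w_{−1}|w_{−1}) = (w₀|w₀) = (w_n|w_n) = 2 and (w_j|w_j) = 1 for 1 ≤ j ≤ n−1, and the Cartan matrix A_{ij} = 2(w_i|w_j)/(w_i|w_i) has entries: A_{ii} = 2; A_{−1,0} = A_{0,−1} = −1; A_{0,1} = −1 and A_{1,0} = −2; A_{j,j+1} = A_{j+1,j} = −1 for 1 ≤ j ≤ n−2; A_{n−1,n} = −2 and A_{n,n−1} = −1; all other entries 0. This is the generalized Cartan matrix of the overextension C_n^∧∧. -/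

import Mathlib

/-!
Each wall form has a gravitational part in `ℝ³` (nonzero only for `w_{−1}, w₀, w₁`) and a
dilaton part, and each part is a combination of at most two coordinate vectors. By
bilinearity every scalar product `(w_i|w_j)` reduces to comparing coordinate indices, which
gives the Gram matrix: along the chain `w₁, …, w_{n−1}` consecutive forms share one
dilaton coordinate, so their product is `−1/2`, while the end pairs `(w_{−1}, w₀)`,
`(w₀, w₁)` and `(w_{n−1}, w_n)` give `−1`. The Cartan matrix is then `2 (w_i|w_j)/(w_i|w_i)`
read off from that table.
-/

/-- The wall scalar product on `ℝ³ × ℝ^{n−1}` (`d = 3` scale factors, `n−1` dilatons):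
`(w|w') = Σᵢ wᵢw'ᵢ − (1/2)(Σᵢ wᵢ)(Σᵢ w'ᵢ) + Σ_α w̃_α w̃'_α`. -/
noncomputable def wallIPC (n : ℕ) (w w' : (Fin 3 → ℝ) × (Fin (n - 1) → ℝ)) : ℝ :=
  (∑ i, w.1 i * w'.1 i) - (1 / 2) * (∑ i, w.1 i) * (∑ i, w'.1 i)
    + ∑ α, w.2 α * w'.2 α

open Matrix

def natSingle (N k : ℕ) : Fin N → ℝ := fun α => if α.val = k then 1 else 0

lemma natSingle_dotProduct_natSingle (N k l : ℕ) :
    natSingle N k ⬝ᵥ natSingle N l = if k = l ∧ k < N then 1 else 0 := by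
  by_cases hk : k < N
  · rw [dotProduct, Finset.sum_eq_single ⟨k, hk⟩]
    · by_cases hkl : k = l
      · subst hkl; simp [natSingle, hk]
      · simp [natSingle, hkl]
    · intro α _ hα
      simp [natSingle, show α.val ≠ k from fun h => hα (Fin.ext h)]
    · simp
  · rw [if_neg (by tauto)]
    refine Finset.sum_eq_zero fun α _ => ?_
    simp [natSingle, show α.val ≠ k by omega]

lemma sum_natSingle (N k : ℕ) : ∑ α, natSingle N k α = if k < N then 1 else 0 := by
  by_cases hk : k < N
  · rw [Finset.sum_eq_single ⟨k, hk⟩] <;> simp [natSingle, hk, Fin.ext_iff]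
  · rw [if_neg hk]
    refine Finset.sum_eq_zero fun α _ => ?_
    simp [natSingle, show α.val ≠ k by omega]

lemma lt_add_two_cases {n p : ℕ} (hp : p < n + 2) :
    p = 0 ∨ p = 1 ∨ p = 2 ∨ (3 ≤ p ∧ p ≤ n) ∨ p = n + 1 := by
  omega

lemma wallIPC_mk (n : ℕ) (g g' : Fin 3 → ℝ) (d d' : Fin (n - 1) → ℝ) :
    wallIPC n (g, d) (g', d') = g ⬝ᵥ g' - 1 / 2 * (∑ i, g i) * (∑ i, g' i) + d ⬝ᵥ d' := rfl

/-- `cnWall n p` is the wall form `w_{p−1}`; `natSingle 3 k` is `e_{k+1}` and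
`natSingle (n - 1) k` is `φ^{k+1}`. -/
noncomputable def cnWall (n p : ℕ) : (Fin 3 → ℝ) × (Fin (n - 1) → ℝ) :=
  if p = 0 then (natSingle 3 2 - natSingle 3 1, 0)
  else if p = 1 then (natSingle 3 1 - natSingle 3 0, 0)
  else if p = 2 then (natSingle 3 0, -(√2 / 2) • natSingle (n - 1) (n - 2))
  else if p ≤ n then (0, (√2 / 2) • (natSingle (n - 1) (n + 1 - p) - natSingle (n - 1) (n - p)))
  else (0, √2 • natSingle (n - 1) 0)

lemma cnWall_zero (n : ℕ) : cnWall n 0 = (natSingle 3 2 - natSingle 3 1, 0) := rfl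

lemma cnWall_one (n : ℕ) : cnWall n 1 = (natSingle 3 1 - natSingle 3 0, 0) := rfl

lemma cnWall_two (n : ℕ) :
    cnWall n 2 = (natSingle 3 0, -(√2 / 2) • natSingle (n - 1) (n - 2)) := rfl

lemma cnWall_of_three_le {n p : ℕ} (h3 : 3 ≤ p) (hpn : p ≤ n) :
    cnWall n p = (0, (√2 / 2) • (natSingle (n - 1) (n + 1 - p) - natSingle (n - 1) (n - p))) := by
  rw [cnWall, if_neg (by omega), if_neg (by omega), if_neg (by omega), if_pos hpn]

lemma cnWall_add_one {n : ℕ} (hn : 2 ≤ n) : cnWall n (n + 1) = (0, √2 • natSingle (n - 1) 0) := by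
  rw [cnWall, if_neg (by omega), if_neg (by omega), if_neg (by omega), if_neg (by omega)]

noncomputable def cnGram (n p q : ℕ) : ℝ :=
  if p = q then (if p = 0 ∨ p = 1 ∨ p = n + 1 then 2 else 1)
  else if p + 1 = q ∨ q + 1 = p then (if p ≤ 2 ∧ q ≤ 2 ∨ n ≤ p ∧ n ≤ q then -1 else -1 / 2)
  else 0

lemma cnGram_self (n p : ℕ) : cnGram n p p = if p = 0 ∨ p = 1 ∨ p = n + 1 then 2 else 1 :=
  if_pos rfl

lemma wallIPC_cnWall {n p q : ℕ} (hn : 3 ≤ n) (hp : p < n + 2) (hq : q < n + 2) :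
    wallIPC n (cnWall n p) (cnWall n q) = cnGram n p q := by
  have hsq : √2 * √2 = 2 := Real.mul_self_sqrt zero_le_two
  rcases lt_add_two_cases hp with rfl | rfl | rfl | ⟨hp3, hpn⟩ | rfl <;>
  rcases lt_add_two_cases hq with rfl | rfl | rfl | ⟨hq3, hqn⟩ | rfl <;>
  simp (disch := omega) only [cnWall_zero, cnWall_one, cnWall_two, cnWall_of_three_le,
    cnWall_add_one, wallIPC_mk, dotProduct_sub, sub_dotProduct, smul_dotProduct,
    dotProduct_smul, dotProduct_zero, zero_dotProduct, natSingle_dotProduct_natSingle,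
    Finset.sum_sub_distrib, sum_natSingle, Pi.sub_apply, Pi.zero_apply, Finset.sum_const_zero,
    smul_eq_mul, cnGram, if_pos, if_neg, true_or, or_true, true_and] <;>
  (try split_ifs) <;> first | omega | linarith [hsq]

noncomputable def cnCartan (n p q : ℕ) : ℝ :=
  if p = q then 2
  else if (p = 0 ∧ q = 1) ∨ (q = 0 ∧ p = 1) then -1
  else if p = 1 ∧ q = 2 then -1
  else if p = 2 ∧ q = 1 then -2
  else if (p + 1 = q ∨ q + 1 = p) ∧ 2 ≤ p ∧ 2 ≤ q ∧ p ≤ n ∧ q ≤ n then -1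
  else if p = n ∧ q = n + 1 then -2
  else if p = n + 1 ∧ q = n then -1
  else 0

lemma two_mul_cnGram_div_cnGram_self {n p q : ℕ} (hn : 3 ≤ n) (hp : p < n + 2) (hq : q < n + 2) :
    2 * cnGram n p q / cnGram n p p = cnCartan n p q := by
  rw [cnGram_self, cnGram, cnCartan]
  rcases lt_add_two_cases hp with rfl | rfl | rfl | ⟨hp3, hpn⟩ | rfl <;>
  rcases lt_add_two_cases hq with rfl | rfl | rfl | ⟨hq3, hqn⟩ | rfl <;>
  simp (disch := omega) only [if_pos, if_neg, true_or, or_true, true_and, and_true] <;>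
  (try split_ifs) <;> first | omega | norm_num

theorem Cn_billiard (n : ℕ) (hn : 3 ≤ n)
    (w : Fin (n + 2) → (Fin 3 → ℝ) × (Fin (n - 1) → ℝ))
    (hw : ∀ m : Fin (n + 2), w m =
      if m.val = 0 then
        (fun l => (if l.val = 2 then (1 : ℝ) else 0) - (if l.val = 1 then 1 else 0),
          fun _ => 0)
      else if m.val = 1 then
        (fun l => (if l.val = 1 then (1 : ℝ) else 0) - (if l.val = 0 then 1 else 0),
          fun _ => 0)
      else if m.val = 2 then
        (fun l => if l.val = 0 then (1 : ℝ) else 0,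
          fun α => if α.val = n - 2 then -(Real.sqrt 2 / 2) else 0)
      else if m.val ≤ n then
        (fun _ => 0,
          fun α => Real.sqrt 2 / 2 * ((if α.val = n + 1 - m.val then (1 : ℝ) else 0)
            - (if α.val = n - m.val then 1 else 0)))
      else
        (fun _ => 0, fun α => if α.val = 0 then Real.sqrt 2 else 0))
    (A : Fin (n + 2) → Fin (n + 2) → ℝ)
    (hA : ∀ i j, A i j = 2 * wallIPC n (w i) (w j) / wallIPC n (w i) (w i)) :
    (∀ m : Fin (n + 2), wallIPC n (w m) (w m) =
      if m.val = 0 ∨ m.val = 1 ∨ m.val = n + 1 then 2 else 1) ∧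
    (∀ i j : Fin (n + 2), A i j =
      if i = j then 2
      else if (i.val = 0 ∧ j.val = 1) ∨ (j.val = 0 ∧ i.val = 1) then -1
      else if i.val = 1 ∧ j.val = 2 then -1
      else if i.val = 2 ∧ j.val = 1 then -2
      else if (i.val + 1 = j.val ∨ j.val + 1 = i.val)
          ∧ 2 ≤ i.val ∧ 2 ≤ j.val ∧ i.val ≤ n ∧ j.val ≤ n then -1
      else if i.val = n ∧ j.val = n + 1 then -2
      else if i.val = n + 1 ∧ j.val = n then -1
      else 0) := by
  have hwall : ∀ m : Fin (n + 2), w m = cnWall n m := by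
    intro m
    rw [hw m, cnWall]
    split_ifs <;> refine Prod.ext (funext fun _ => ?_) (funext fun _ => ?_) <;>
      simp [natSingle, mul_ite]
  have hgram : ∀ i j : Fin (n + 2), wallIPC n (w i) (w j) = cnGram n i j := fun i j => by
    rw [hwall, hwall]
    exact wallIPC_cnWall hn i.isLt j.isLt
  refine ⟨fun m => by rw [hgram, cnGram_self], fun i j => ?_⟩
  rw [hA, hgram, hgram]
  simp only [← Fin.val_inj]
  exact two_mul_cnGram_div_cnGram_self hn i.isLt j.isLt
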